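/- arXiv:1706.08020 — 6 statements merged into one kernel-verified Lean document; each statement's English description precedes it below -/
import Mathlib

section
/- Let A and B be p×p real matrices and suppose ‖A − B‖_max ≤ C₁√(log p / n) for some C₁ > 0. Let t = K√(log p / n) with K > C₁, and let τ_t denote entrywise hard thresholding. If B belongs to the class U(q, s_p, M) (so every row of B satisfies ∑_j |b_{ij}|^q ≤ s_p), then there is a constant C₂ depending only on C₁, K, q such that the spectral norm satisfies ‖τ_t(A) − B‖ ≤ C₂ s_p (log p / n)^{(1−q)/2}. -/
open scoped BigOperators

noncomputable def spec {p : ℕ} (A : Matrix (Fin p) (Fin p) ℝ) : ℝ :=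
  ‖Matrix.toEuclideanCLM (𝕜 := ℝ) (n := Fin p) A‖

/-- Entrywise hard-thresholding operator. -/
noncomputable def tau {p : ℕ} (t : ℝ) (A : Matrix (Fin p) (Fin p) ℝ) : Matrix (Fin p) (Fin p) ℝ :=
  Matrix.of fun i j => if t < |A i j| then A i j else 0

/-!
With `ε = √(log p / n)`, every entry `d` of `τ_t(A) - B` satisfies `|d| ≲ ε` and `|d| ≲ |b|`,
where `b` is the corresponding entry of `B`: a kept entry has error at most `C₁ ε` and
`|b| ≥ (K - C₁) ε`, while a killed entry has `d = -b` and `|b| ≤ (K + C₁) ε`.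
Interpolating, `|d| ≲ |b| ^ q ε ^ (1 - q)`, so every row sum of `|τ_t(A) - B|` is `≲ s_p ε ^ (1 - q)`,
and so is every column sum because `B` is symmetric. The Schur test
`‖D‖ ≤ √(max row sum · max column sum)` then bounds the spectral norm; `τ_t(A) - B` itself
need not be symmetric.
-/

open Finset

theorem sq_sum_mul_le_sum_abs_mul_sum_abs_mul_sq {ι : Type*} (s : Finset ι) (w v : ι → ℝ) :
    (∑ j ∈ s, w j * v j) ^ 2 ≤ (∑ j ∈ s, |w j|) * ∑ j ∈ s, |w j| * v j ^ 2 :=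
  sum_sq_le_sum_mul_sum_of_sq_le_mul s (fun _ _ => abs_nonneg _) (fun _ _ => by positivity)
    fun j _ => le_of_eq (by rw [mul_pow, ← sq_abs (w j)]; ring)

namespace Matrix

variable {n : Type*} [Fintype n] [DecidableEq n]

theorem norm_toEuclideanCLM_le_of_sum_abs_le {D : Matrix n n ℝ} {r : ℝ} (hr : 0 ≤ r)
    (hrow : ∀ i, ∑ j, |D i j| ≤ r) (hcol : ∀ j, ∑ i, |D i j| ≤ r) :
    ‖toEuclideanCLM (𝕜 := ℝ) D‖ ≤ r := by
  refine ContinuousLinearMap.opNorm_le_bound _ hr fun x => ?_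
  refine (sq_le_sq₀ (norm_nonneg _) (by positivity)).mp ?_
  rw [mul_pow, EuclideanSpace.real_norm_sq_eq, EuclideanSpace.real_norm_sq_eq,
    ofLp_toEuclideanCLM]
  calc ∑ i, (D *ᵥ x.ofLp) i ^ 2 ≤ ∑ i, r * ∑ j, |D i j| * x j ^ 2 := by
        gcongr with i
        exact (sq_sum_mul_le_sum_abs_mul_sum_abs_mul_sq _ (D i) x.ofLp).trans
          (mul_le_mul_of_nonneg_right (hrow i) (by positivity))
    _ = r * ∑ j, (∑ i, |D i j|) * x j ^ 2 := by
        rw [← mul_sum, sum_comm]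
        simp_rw [sum_mul]
    _ ≤ r * ∑ j, r * x j ^ 2 := by
        gcongr with j
        exact hcol j
    _ = r ^ 2 * ∑ j, x j ^ 2 := by rw [← mul_sum]; ring

theorem norm_toEuclideanCLM_le_of_abs_le_of_isSymm {D W : Matrix n n ℝ} {r : ℝ} (hr : 0 ≤ r)
    (hW : W.IsSymm) (hDW : ∀ i j, |D i j| ≤ W i j) (hrow : ∀ i, ∑ j, W i j ≤ r) :
    ‖toEuclideanCLM (𝕜 := ℝ) D‖ ≤ r :=
  norm_toEuclideanCLM_le_of_sum_abs_le hr
    (fun i => (sum_le_sum fun j _ => hDW i j).trans (hrow i))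
    (fun j => (sum_le_sum fun i _ => (hDW i j).trans_eq (hW.apply i j).symm).trans (hrow j))

end Matrix

theorem le_rpow_mul_rpow_of_le_of_le {d x y q : ℝ} (hd : 0 ≤ d) (hx : d ≤ x) (hy : d ≤ y)
    (hq0 : 0 ≤ q) (hq1 : q ≤ 1) : d ≤ x ^ q * y ^ (1 - q) :=
  calc d = d ^ q * d ^ (1 - q) := by
        rw [← Real.rpow_add' hd (by norm_num), add_sub_cancel, Real.rpow_one]
    _ ≤ x ^ q * y ^ (1 - q) :=
        mul_le_mul (Real.rpow_le_rpow hd hx hq0) (Real.rpow_le_rpow hd hy (sub_nonneg.2 hq1))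
          (by positivity) (Real.rpow_nonneg (hd.trans hx) q)

section HardThreshold

variable {a b C K ε : ℝ}

theorem abs_ite_sub_le_add_mul (hK : 0 ≤ K) (hε : 0 ≤ ε) (hab : |a - b| ≤ C * ε) :
    |(if K * ε < |a| then a else 0) - b| ≤ (K + C) * ε := by
  split_ifs with h
  · nlinarith [mul_nonneg hK hε]
  · have := abs_sub_abs_le_abs_sub b a
    rw [abs_sub_comm] at this
    rw [zero_sub, abs_neg]
    linarith [not_lt.mp h]

theorem sub_mul_abs_ite_sub_le (hC : 0 ≤ C) (hCK : C ≤ K) (hab : |a - b| ≤ C * ε) :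
    (K - C) * |(if K * ε < |a| then a else 0) - b| ≤ K * |b| := by
  split_ifs with h
  · have hb : (K - C) * ε ≤ |b| := by linarith [abs_sub_abs_le_abs_sub a b]
    calc (K - C) * |a - b| ≤ (K - C) * (C * ε) := mul_le_mul_of_nonneg_left hab (sub_nonneg.2 hCK)
      _ = C * ((K - C) * ε) := by ring
      _ ≤ C * |b| := mul_le_mul_of_nonneg_left hb hC
      _ ≤ K * |b| := mul_le_mul_of_nonneg_right hCK (abs_nonneg b)
  · rw [zero_sub, abs_neg]
    nlinarith [abs_nonneg b]

theorem abs_ite_sub_le_rpow {q : ℝ} (hC : 0 ≤ C) (hCK : C < K) (hε : 0 ≤ ε) (hq0 : 0 ≤ q)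
    (hq1 : q ≤ 1) (hab : |a - b| ≤ C * ε) :
    |(if K * ε < |a| then a else 0) - b|
      ≤ (K / (K - C)) ^ q * (K + C) ^ (1 - q) * ε ^ (1 - q) * |b| ^ q := by
  have hKC : 0 < K - C := sub_pos.2 hCK
  have hK : 0 ≤ K := hC.trans hCK.le
  calc _ ≤ (K / (K - C) * |b|) ^ q * ((K + C) * ε) ^ (1 - q) := by
        refine le_rpow_mul_rpow_of_le_of_le (abs_nonneg _) ?_
          (abs_ite_sub_le_add_mul hK hε hab) hq0 hq1
        rw [div_mul_eq_mul_div, le_div_iff₀ hKC, mul_comm]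
        exact sub_mul_abs_ite_sub_le hC hCK.le hab
    _ = _ := by
        rw [Real.mul_rpow (div_nonneg hK hKC.le) (abs_nonneg b),
          Real.mul_rpow (by positivity) hε]
        ring

end HardThreshold

theorem stmt0 (C₁ K q : ℝ) (hC₁ : 0 < C₁) (hK : C₁ < K) (hq0 : 0 ≤ q) (hq1 : q ≤ 1) :
    ∃ C₂ : ℝ, ∀ (p n : ℕ), 0 < p → 0 < n →
      ∀ (sp M : ℝ), 0 < sp → 0 < M →
      ∀ (A B : Matrix (Fin p) (Fin p) ℝ),
        B.PosDef →
        (∀ i, B i i ≤ M) →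
        (∀ i, ∑ j, |B i j| ^ q ≤ sp) →
        (∀ i j, |A i j - B i j| ≤ C₁ * Real.sqrt (Real.log p / n)) →
        spec (tau (K * Real.sqrt (Real.log p / n)) A - B)
          ≤ C₂ * sp * (Real.log p / n) ^ ((1 - q) / 2) := by
  set c := (K / (K - C₁)) ^ q * (K + C₁) ^ (1 - q)
  refine ⟨c, fun p n hp _ sp M hsp _ A B hB _ hrow hAB => ?_⟩
  set x := Real.log p / n
  have hx : 0 ≤ x := div_nonneg (Real.log_nonneg (by exact_mod_cast hp)) n.cast_nonneg
  have hc : 0 ≤ c := mul_nonneg (Real.rpow_nonneg (div_nonneg (by linarith) (by linarith)) _)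
    (Real.rpow_nonneg (by linarith) _)
  have hcx : 0 ≤ c * √x ^ (1 - q) := mul_nonneg hc (by positivity)
  have hW : (Matrix.of fun i j => c * √x ^ (1 - q) * |B i j| ^ q).IsSymm :=
    Matrix.IsSymm.ext fun i j => by simp [← hB.isHermitian.apply i j]
  calc spec (tau (K * √x) A - B) ≤ c * √x ^ (1 - q) * sp :=
        Matrix.norm_toEuclideanCLM_le_of_abs_le_of_isSymm (mul_nonneg hcx hsp.le) hW
          (fun i j => abs_ite_sub_le_rpow hC₁.le hK (Real.sqrt_nonneg x) hq0 hq1 (hAB i j))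
          (fun i => by simpa only [Matrix.of_apply, ← mul_sum] using
            mul_le_mul_of_nonneg_left (hrow i) hcx)
    _ = c * sp * x ^ ((1 - q) / 2) := by
        rw [Real.sqrt_eq_rpow, ← Real.rpow_mul hx, one_div_mul_eq_div]
        ring
end

section
/- Let B be a p×p symmetric positive semidefinite matrix with trace p and ‖B‖_max ≤ b_max, and let A be a p×p symmetric positive semidefinite matrix with ‖A − B‖_max < ε ≤ 1/2. Then ‖(p/tr(A))·A − B‖_max ≤ 2(1 + b_max)·ε. -/
/-!
The diagonal of `A` is within `ε` of that of `B`, so `tr A` is within `p ε` of `tr B = p`; since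
`ε ≤ 1/2` this gives `tr A ≥ p/2` and hence `|p / tr A - 1| ≤ 2ε`. Positive semidefiniteness
bounds every entry of `A` by its largest diagonal entry, which is at most `b_max + ε`. Writing
`(p / tr A) A - B = (A - B) + (p / tr A - 1) A` then gives the bound
`ε + 2ε (b_max + ε) ≤ 2 (1 + b_max) ε`.
-/

namespace Matrix

variable {n R : Type*}

theorem PosSemidef.two_mul_abs_apply_le [CommRing R] [LinearOrder R] [IsStrictOrderedRing R]
    [StarRing R] [TrivialStar R] {A : Matrix n n R} (hA : A.PosSemidef) (i j : n) :
    2 * |A i j| ≤ A i i + A j j := by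
  have hsymm : A j i = A i j := by simpa using hA.1.apply i j
  have hplus := hA.2 (Finsupp.single i 1 + Finsupp.single j 1)
  have hminus := hA.2 (Finsupp.single i 1 + Finsupp.single j (-1))
  simp only [Finsupp.sum_add_index', Finsupp.sum_single_index, Finsupp.sum_add, star_trivial,
    add_mul, mul_add, zero_mul, mul_zero, one_mul, mul_one, neg_mul, mul_neg, Finsupp.sum_neg,
    implies_true, hsymm] at hplus hminus
  rcases abs_cases (A i j) with ⟨h, -⟩ | ⟨h, -⟩ <;> rw [h] <;> linarith

theorem PosSemidef.abs_apply_le_of_diag_le [CommRing R] [LinearOrder R] [IsStrictOrderedRing R]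
    [StarRing R] [TrivialStar R] {A : Matrix n n R} (hA : A.PosSemidef) {c : R}
    (hc : ∀ k, A k k ≤ c) (i j : n) : |A i j| ≤ c := by
  linarith [hA.two_mul_abs_apply_le i j, hc i, hc j]

theorem abs_trace_sub_trace_le [Fintype n] [Ring R] [LinearOrder R] [IsOrderedRing R]
    {A B : Matrix n n R} {ε : R} (h : ∀ k, |A k k - B k k| ≤ ε) :
    |A.trace - B.trace| ≤ Fintype.card n * ε := by
  rw [← trace_sub]
  calc |∑ k, (A - B) k k| ≤ ∑ k, |A k k - B k k| := Finset.abs_sum_le_sum_abs _ _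
    _ ≤ ∑ _k : n, ε := Finset.sum_le_sum fun k _ => h k
    _ = Fintype.card n * ε := by simp

end Matrix

theorem abs_div_sub_one_le_two_mul {p t ε : ℝ} (hp : 0 < p) (ht : |t - p| ≤ p * ε)
    (hε : ε ≤ 1 / 2) : |p / t - 1| ≤ 2 * ε := by
  have ht_half : p / 2 ≤ t := by nlinarith [neg_abs_le (t - p)]
  have ht_pos : 0 < t := by linarith
  rw [div_sub_one ht_pos.ne', abs_div, abs_of_pos ht_pos, div_le_iff₀ ht_pos, abs_sub_comm]
  nlinarith [abs_nonneg (t - p)]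

theorem stmt1_general {p : ℕ} (b_max ε : ℝ) (hε : ε ≤ 1 / 2)
    (A B : Matrix (Fin p) (Fin p) ℝ)
    (hBtr : B.trace = p) (hBmax : ∀ i j, |B i j| ≤ b_max)
    (hA : A.PosSemidef) (hAB : ∀ i j, |A i j - B i j| < ε) :
    ∀ i j, |(((p : ℝ) / A.trace) • A - B) i j| ≤ 2 * (1 + b_max) * ε := by
  intro i j
  have hdiag : ∀ k, |A k k - B k k| ≤ ε := fun k => (hAB k k).le
  have hp : (0 : ℝ) < p := by exact_mod_cast i.pos
  have hscale : |p / A.trace - 1| ≤ 2 * ε := by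
    refine abs_div_sub_one_le_two_mul hp ?_ hε
    simpa [hBtr] using Matrix.abs_trace_sub_trace_le hdiag
  have hAij : |A i j| ≤ b_max + ε := by
    refine hA.abs_apply_le_of_diag_le (fun k => ?_) i j
    linarith [le_abs_self (A k k - B k k), le_abs_self (B k k), hdiag k, hBmax k k]
  have hε0 : 0 ≤ ε := (abs_nonneg _).trans (hdiag i)
  have hentry : ((p / A.trace) • A - B) i j = (A i j - B i j) + (p / A.trace - 1) * A i j := by
    simp only [Matrix.sub_apply, Matrix.smul_apply, smul_eq_mul]
    ring
  calc |((p / A.trace) • A - B) i j|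
      ≤ |A i j - B i j| + |p / A.trace - 1| * |A i j| := by
        rw [hentry, ← abs_mul]
        exact abs_add_le _ _
    _ ≤ ε + 2 * ε * (b_max + ε) := by gcongr; exact (hAB i j).le
    _ ≤ 2 * (1 + b_max) * ε := by nlinarith

theorem stmt1 {p : ℕ} (hp : 0 < p) (b_max ε : ℝ) (hε : ε ≤ 1 / 2)
    (A B : Matrix (Fin p) (Fin p) ℝ)
    (hB : B.PosSemidef) (hBtr : B.trace = p) (hBmax : ∀ i j, |B i j| ≤ b_max)
    (hA : A.PosSemidef) (hAB : ∀ i j, |A i j - B i j| < ε) :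
    ∀ i j, |(((p : ℝ) / A.trace) • A - B) i j| ≤ 2 * (1 + b_max) * ε :=
  stmt1_general b_max ε hε A B hBtr hBmax hA hAB
end

section
/- Let S be a symmetric positive semidefinite p×p matrix with eigendecomposition having largest eigenvalue d₁, and let β > 0. Then for every nonzero x ∈ ℝ^p, the ratio (xᵀ(S+βI)⁻¹ S (S+βI)⁻¹ x) / (xᵀ(S+βI)⁻¹ x) ≤ d₁/(d₁+β). -/
open Matrix

open scoped BigOperators

/-!
With `A = S + β • 1` and `y = A⁻¹ x`, the numerator is `yᵀ S y` and the denominator is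
`yᵀ A y = yᵀ S y + β ‖y‖²`. As `t ↦ t / (t + β ‖y‖²)` is increasing and
`0 ≤ yᵀ S y ≤ d₁ ‖y‖²`, the ratio is at most `d₁ ‖y‖² / (d₁ ‖y‖² + β ‖y‖²)`.
-/

lemma div_add_mul_le_div_add {a b d β : ℝ} (ha : 0 ≤ a) (hb : 0 ≤ b) (hd : 0 ≤ d) (hβ : 0 < β)
    (had : a ≤ d * b) : a / (a + β * b) ≤ d / (d + β) := by
  rcases hb.eq_or_lt with rfl | hb
  · obtain rfl : a = 0 := by linarith
    simp only [mul_zero, add_zero, div_zero]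
    positivity
  · rw [div_le_div_iff₀ (by positivity) (by positivity)]
    nlinarith [mul_le_mul_of_nonneg_left had hβ.le]

lemma spec_nonneg {p : ℕ} (A : Matrix (Fin p) (Fin p) ℝ) : 0 ≤ spec A :=
  norm_nonneg _

lemma dotProduct_mulVec_le_spec_mul {p : ℕ} (A : Matrix (Fin p) (Fin p) ℝ) (z : Fin p → ℝ) :
    z ⬝ᵥ (A *ᵥ z) ≤ spec A * (z ⬝ᵥ z) := by
  set T := toEuclideanCLM (𝕜 := ℝ) (n := Fin p) A
  set z' : EuclideanSpace ℝ (Fin p) := WithLp.toLp 2 z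
  have hnorm : z ⬝ᵥ z = ‖z'‖ ^ 2 := by
    rw [← real_inner_self_eq_norm_sq, EuclideanSpace.inner_toLp_toLp, star_trivial]
  calc z ⬝ᵥ (A *ᵥ z) = inner ℝ z' (T z') := (inner_toEuclideanCLM A z' z').symm
    _ ≤ ‖z'‖ * ‖T z'‖ := real_inner_le_norm _ _
    _ ≤ ‖z'‖ * (‖T‖ * ‖z'‖) := by gcongr; exact T.le_opNorm z'
    _ = spec A * (z ⬝ᵥ z) := by rw [hnorm, spec]; ring

lemma dotProduct_mul_mul_mulVec_of_transpose_eq {R n : Type*} [CommSemiring R] [Fintype n]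
    (M S : Matrix n n R) (hM : Mᵀ = M) (x : n → R) :
    x ⬝ᵥ ((M * S * M) *ᵥ x) = (M *ᵥ x) ⬝ᵥ (S *ᵥ (M *ᵥ x)) := by
  rw [← mulVec_mulVec, ← mulVec_mulVec, dotProduct_mulVec, ← mulVec_transpose, hM]

lemma dotProduct_nonsing_inv_mulVec {n K : Type*} [Fintype n] [DecidableEq n] [CommRing K]
    (A : Matrix n n K) (hA : IsUnit A.det) (x : n → K) :
    x ⬝ᵥ (A⁻¹ *ᵥ x) = (A⁻¹ *ᵥ x) ⬝ᵥ (A *ᵥ (A⁻¹ *ᵥ x)) := by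
  rw [mulVec_mulVec, mul_nonsing_inv A hA, one_mulVec, dotProduct_comm]

theorem stmt6_general {p : ℕ} (S : Matrix (Fin p) (Fin p) ℝ) (hS : S.PosSemidef)
    (β : ℝ) (hβ : 0 < β) (d₁ : ℝ) (hd₁ : d₁ = spec S)
    (x : Fin p → ℝ) :
    (x ⬝ᵥ (((S + β • 1)⁻¹ * S * (S + β • 1)⁻¹) *ᵥ x)) / (x ⬝ᵥ ((S + β • 1)⁻¹ *ᵥ x))
      ≤ d₁ / (d₁ + β) := by
  have hA : (S + β • 1).PosDef := PosDef.posSemidef_add hS (PosDef.one.smul hβ)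
  have hAinv_symm : (S + β • 1)⁻¹ᵀ = (S + β • 1)⁻¹ := by
    simpa [conjTranspose_eq_transpose_of_trivial] using hA.inv.isHermitian.eq
  have hA_det : IsUnit (S + β • 1).det := (isUnit_iff_isUnit_det _).mp hA.isUnit
  set y := (S + β • 1)⁻¹ *ᵥ x
  have hden : x ⬝ᵥ ((S + β • 1)⁻¹ *ᵥ x) = y ⬝ᵥ (S *ᵥ y) + β * (y ⬝ᵥ y) := by
    rw [dotProduct_nonsing_inv_mulVec _ hA_det, add_mulVec, dotProduct_add, smul_mulVec,
      one_mulVec, dotProduct_smul, smul_eq_mul]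
  rw [dotProduct_mul_mul_mulVec_of_transpose_eq _ S hAinv_symm, hden, hd₁]
  exact div_add_mul_le_div_add (hS.dotProduct_mulVec_nonneg y) (dotProduct_self_star_nonneg y)
    (spec_nonneg S) hβ (dotProduct_mulVec_le_spec_mul S y)

theorem stmt6 {p : ℕ} (S : Matrix (Fin p) (Fin p) ℝ) (hS : S.PosSemidef)
    (β : ℝ) (hβ : 0 < β) (d₁ : ℝ) (hd₁ : d₁ = spec S)
    (x : Fin p → ℝ) (hx : x ≠ 0) :
    (x ⬝ᵥ (((S + β • 1)⁻¹ * S * (S + β • 1)⁻¹) *ᵥ x)) / (x ⬝ᵥ ((S + β • 1)⁻¹ *ᵥ x))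
      ≤ d₁ / (d₁ + β) :=
  stmt6_general S hS β hβ d₁ hd₁ x
end

section
/- Let x₁,…,x_n be unit vectors in ℝ^p, α > 0, and suppose Σ is a symmetric positive definite p×p matrix satisfying the regularized TME fixed-point equation Σ = (1/(1+α))·(p/n)·∑_i x_i x_iᵀ/(x_iᵀΣ⁻¹x_i) + (α/(1+α))·I. Let C = (p/n)·‖∑_i x_i x_iᵀ‖ and assume 1 + α > C. Then ‖Σ‖ ≤ (α/(1+α))·1/(1 − C/(1+α)) and moreover ‖Σ − (α/(1+α))I‖ = ‖Σ‖ − α/(1+α) ≤ (C/(1+α))·(α/(1+α))·1/(1 − C/(1+α)). -/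
/-!
Put `c = α / (1 + α)` and `P = Σ - c • 1`. The fixed-point equation writes `P` as a nonnegative
combination of the `xᵢ xᵢᵀ` with weights `(p / n) / (1 + α) · 1 / (xᵢᵀ Σ⁻¹ xᵢ)`, and Cauchy–Schwarz
for the form of `Σ⁻¹` gives `1 / (xᵢᵀ Σ⁻¹ xᵢ) ≤ xᵢᵀ Σ xᵢ ≤ ‖Σ‖`. Hence, in the Loewner order,
`0 ≤ P ≤ (‖Σ‖ / (1 + α)) (p / n) ∑ xᵢ xᵢᵀ`, so `‖P‖ ≤ (C / (1 + α)) ‖Σ‖`. The norm of a positive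
operator is the maximum of its quadratic form on the unit sphere, so `‖Σ‖ = ‖P + c • 1‖ = ‖P‖ + c`,
and the two relations together give `(1 - C / (1 + α)) ‖Σ‖ ≤ c`.
-/

open Matrix

open scoped BigOperators

namespace ContinuousLinearMap

variable {𝕜 E : Type*} [RCLike 𝕜] [NormedAddCommGroup E] [InnerProductSpace 𝕜 E]

theorem reApplyInnerSelf_le_norm {x : E} (hx : ‖x‖ = 1) (T : E →L[𝕜] E) :
    T.reApplyInnerSelf x ≤ ‖T‖ := by
  have := (le_abs_self _).trans (T.rayleighQuotient_le_norm x)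
  rwa [rayleighQuotient, hx, one_pow, div_one] at this

theorem IsPositive.norm_le_of_forall_reApplyInnerSelf_le {T : E →L[𝕜] E} (hT : T.IsPositive)
    {r : ℝ} (hr : 0 ≤ r) (h : ∀ x, ‖x‖ = 1 → T.reApplyInnerSelf x ≤ r) : ‖T‖ ≤ r := by
  rw [T.norm_eq_iSup_rayleighQuotient hT.isSymmetric]
  refine ciSup_le fun x => ?_
  rw [abs_of_nonneg (div_nonneg (hT.2 x) (sq_nonneg _))]
  rcases eq_or_ne x 0 with rfl | hx
  · simpa using hr
  have hx' : ‖x‖ ≠ 0 := norm_ne_zero_iff.mpr hx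
  have hunit : ‖(‖x‖⁻¹ : 𝕜) • x‖ = 1 := by
    simp [norm_smul, hx']
  change T.rayleighQuotient x ≤ r
  rw [← T.rayleigh_smul x (c := (‖x‖⁻¹ : 𝕜)) (by simpa using hx'), rayleighQuotient, hunit,
    one_pow, div_one]
  exact h _ hunit

theorem IsPositive.exists_reApplyInnerSelf_eq_norm [FiniteDimensional 𝕜 E] [Nontrivial E]
    {T : E →L[𝕜] E} (hT : T.IsPositive) : ∃ x, ‖x‖ = 1 ∧ T.reApplyInnerSelf x = ‖T‖ := by
  have := FiniteDimensional.proper_rclike 𝕜 E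
  let : NormedSpace ℝ E := NormedSpace.restrictScalars ℝ 𝕜 E
  obtain ⟨x₀, hx₀, hmax⟩ := (isCompact_sphere (0 : E) 1).exists_isMaxOn
    (NormedSpace.sphere_nonempty.mpr zero_le_one) T.reApplyInnerSelf_continuous.continuousOn
  have hx₀ : ‖x₀‖ = 1 := by simpa using hx₀
  refine ⟨x₀, hx₀, le_antisymm (T.reApplyInnerSelf_le_norm hx₀) ?_⟩
  exact hT.norm_le_of_forall_reApplyInnerSelf_le (hT.2 x₀) fun x hx => hmax (by simpa using hx)

theorem IsPositive.norm_le_norm_of_isPositive_sub [FiniteDimensional 𝕜 E] {T S : E →L[𝕜] E}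
    (hT : T.IsPositive) (hST : (S - T).IsPositive) : ‖T‖ ≤ ‖S‖ := by
  nontriviality E
  obtain ⟨x, hx, hTx⟩ := hT.exists_reApplyInnerSelf_eq_norm
  have := hST.2 x
  simp only [reApplyInnerSelf_apply, _root_.sub_apply, inner_sub_left, map_sub,
    sub_nonneg] at this
  calc ‖T‖ = T.reApplyInnerSelf x := hTx.symm
    _ ≤ S.reApplyInnerSelf x := this
    _ ≤ ‖S‖ := S.reApplyInnerSelf_le_norm hx

theorem IsPositive.norm_add_smul_one [FiniteDimensional 𝕜 E] [Nontrivial E] {T : E →L[𝕜] E}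
    (hT : T.IsPositive) {c : ℝ} (hc : 0 ≤ c) : ‖T + (c : 𝕜) • 1‖ = ‖T‖ + c := by
  refine le_antisymm ?_ ?_
  · refine (norm_add_le _ _).trans ?_
    simp [norm_smul, abs_of_nonneg hc]
  · obtain ⟨x, hx, hTx⟩ := hT.exists_reApplyInnerSelf_eq_norm
    calc ‖T‖ + c = (T + (c : 𝕜) • 1).reApplyInnerSelf x := by
          simp [reApplyInnerSelf_apply, inner_add_left, inner_smul_left, hx, ← hTx]
      _ ≤ ‖T + (c : 𝕜) • 1‖ := reApplyInnerSelf_le_norm hx _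

end ContinuousLinearMap

section RealMatrix

variable {n : Type*} [Fintype n]

theorem Matrix.PosSemidef.isPositive_toEuclideanCLM [DecidableEq n] {A : Matrix n n ℝ}
    (hA : A.PosSemidef) : (toEuclideanCLM (𝕜 := ℝ) A).IsPositive :=
  Matrix.isPositive_toEuclideanLin_iff.mpr hA

theorem reApplyInnerSelf_toEuclideanCLM [DecidableEq n] (A : Matrix n n ℝ) (v : n → ℝ) :
    (toEuclideanCLM (𝕜 := ℝ) A).reApplyInnerSelf (WithLp.toLp 2 v) = v ⬝ᵥ A *ᵥ v := by
  rw [ContinuousLinearMap.reApplyInnerSelf_apply, RCLike.re_to_real, real_inner_comm,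
    inner_toEuclideanCLM]

theorem norm_toLp_eq_one {v : n → ℝ} (hv : v ⬝ᵥ v = 1) : ‖WithLp.toLp 2 v‖ = 1 := by
  rw [← pow_eq_one_iff_of_nonneg (norm_nonneg _) two_ne_zero, ← real_inner_self_eq_norm_sq,
    EuclideanSpace.inner_toLp_toLp]
  simpa using hv

theorem Matrix.PosDef.sq_dotProduct_le_mul [DecidableEq n] {S : Matrix n n ℝ} (hS : S.PosDef)
    (x : n → ℝ) :
    (x ⬝ᵥ x) ^ 2 ≤ (x ⬝ᵥ S⁻¹ *ᵥ x) * (x ⬝ᵥ S *ᵥ x) := by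
  rcases eq_or_ne x 0 with rfl | hx
  · simp
  have hm : 0 < x ⬝ᵥ S *ᵥ x := by simpa using hS.dotProduct_mulVec_pos hx
  have hdet : IsUnit S.det := (isUnit_iff_isUnit_det S).mp hS.isUnit
  have hinv : S⁻¹ *ᵥ S *ᵥ x = x := by
    rw [mulVec_mulVec, nonsing_inv_mul _ hdet, one_mulVec]
  have hsymm : (S *ᵥ x) ⬝ᵥ S⁻¹ *ᵥ x = x ⬝ᵥ x := by
    have hST : Sᵀ = S := by simpa [conjTranspose_eq_transpose_of_trivial] using hS.isHermitian.eq
    rw [dotProduct_comm, dotProduct_mulVec, ← mulVec_transpose, hST, mulVec_mulVec,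
      mul_nonsing_inv _ hdet, one_mulVec]
  -- `t` minimises `t ↦ (x - t • S x)ᵀ S⁻¹ (x - t • S x) = xᵀ S⁻¹ x - 2 t xᵀx + t² xᵀ S x`
  set t := (x ⬝ᵥ x) / (x ⬝ᵥ S *ᵥ x)
  have h := hS.inv.posSemidef.dotProduct_mulVec_nonneg (x - t • S *ᵥ x)
  simp only [star_trivial, mulVec_sub, mulVec_smul, hinv, dotProduct_sub, sub_dotProduct,
    dotProduct_smul, smul_dotProduct, hsymm, smul_eq_mul] at h
  have htm : t * (x ⬝ᵥ S *ᵥ x) = x ⬝ᵥ x := div_mul_cancel₀ _ hm.ne'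
  rw [dotProduct_comm (S *ᵥ x), htm, sub_self, mul_zero, sub_zero, sub_nonneg] at h
  calc (x ⬝ᵥ x) ^ 2 = t * (x ⬝ᵥ x) * (x ⬝ᵥ S *ᵥ x) := by rw [mul_right_comm, htm, sq]
    _ ≤ (x ⬝ᵥ S⁻¹ *ᵥ x) * (x ⬝ᵥ S *ᵥ x) := mul_le_mul_of_nonneg_right h hm.le

theorem posSemidef_sum_smul_vecMulVec {ι : Type*} [Fintype ι] (x : ι → n → ℝ) {w : ι → ℝ}
    (hw : ∀ i, 0 ≤ w i) : (∑ i, w i • vecMulVec (x i) (x i)).PosSemidef :=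
  posSemidef_sum _ fun i _ => by
    simpa using (posSemidef_vecMulVec_self_star (x i)).smul (hw i)

end RealMatrix

section SpectralNorm

variable {p : ℕ}

theorem spec_smul (t : ℝ) (A : Matrix (Fin p) (Fin p) ℝ) : spec (t • A) = |t| * spec A := by
  simp [spec, norm_smul]

theorem dotProduct_mulVec_le_spec (A : Matrix (Fin p) (Fin p) ℝ) {v : Fin p → ℝ}
    (hv : v ⬝ᵥ v = 1) : v ⬝ᵥ A *ᵥ v ≤ spec A := by
  rw [← reApplyInnerSelf_toEuclideanCLM]
  exact ContinuousLinearMap.reApplyInnerSelf_le_norm (norm_toLp_eq_one hv) _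

theorem spec_le_spec_of_posSemidef_sub {A B : Matrix (Fin p) (Fin p) ℝ} (hA : A.PosSemidef)
    (hBA : (B - A).PosSemidef) : spec A ≤ spec B :=
  hA.isPositive_toEuclideanCLM.norm_le_norm_of_isPositive_sub <| by
    simpa only [map_sub] using hBA.isPositive_toEuclideanCLM

theorem spec_add_smul_one [NeZero p] {A : Matrix (Fin p) (Fin p) ℝ} (hA : A.PosSemidef) {c : ℝ}
    (hc : 0 ≤ c) : spec (A + c • 1) = spec A + c := by
  simpa [spec] using hA.isPositive_toEuclideanCLM.norm_add_smul_one hc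

theorem one_div_dotProduct_inv_mulVec_le_spec {S : Matrix (Fin p) (Fin p) ℝ} (hS : S.PosDef)
    {x : Fin p → ℝ} (hx : x ⬝ᵥ x = 1) : 1 / (x ⬝ᵥ S⁻¹ *ᵥ x) ≤ spec S := by
  have hq : 0 < x ⬝ᵥ S⁻¹ *ᵥ x := by
    simpa using hS.inv.dotProduct_mulVec_pos (x := x) fun h => by simp [h] at hx
  have hcs := hS.sq_dotProduct_le_mul x
  rw [hx, one_pow] at hcs
  rw [div_le_iff₀ hq, mul_comm]
  exact hcs.trans (mul_le_mul_of_nonneg_left (dotProduct_mulVec_le_spec S hx) hq.le)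

theorem spec_sum_smul_vecMulVec_le {ι : Type*} [Fintype ι] (x : ι → Fin p → ℝ) {w : ι → ℝ}
    {L : ℝ} (hw : ∀ i, 0 ≤ w i) (hwL : ∀ i, w i ≤ L) (hL : 0 ≤ L) :
    spec (∑ i, w i • vecMulVec (x i) (x i)) ≤ L * spec (∑ i, vecMulVec (x i) (x i)) := by
  rw [← abs_of_nonneg hL, ← spec_smul, Finset.smul_sum]
  refine spec_le_spec_of_posSemidef_sub (posSemidef_sum_smul_vecMulVec x hw) ?_
  simp_rw [← Finset.sum_sub_distrib, ← sub_smul]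
  exact posSemidef_sum_smul_vecMulVec x fun i => sub_nonneg.2 (hwL i)

end SpectralNorm

theorem stmt9_general {p n : ℕ} (hp : 0 < p)
    (x : Fin n → Fin p → ℝ) (hunit : ∀ i, ∑ j, x i j ^ 2 = 1)
    (α : ℝ) (hα : 0 < α)
    (Sig : Matrix (Fin p) (Fin p) ℝ) (hSig : Sig.PosDef)
    (hfix : Sig = (1 / (1 + α)) • (((p : ℝ) / n) •
        ∑ i, (1 / (x i ⬝ᵥ (Sig⁻¹ *ᵥ x i))) • Matrix.vecMulVec (x i) (x i)) +
      (α / (1 + α)) • (1 : Matrix (Fin p) (Fin p) ℝ))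
    (C : ℝ) (hC : C = ((p : ℝ) / n) * spec (∑ i, Matrix.vecMulVec (x i) (x i)))
    (hCα : C < 1 + α) :
    spec Sig ≤ (α / (1 + α)) * (1 / (1 - C / (1 + α))) ∧
    spec (Sig - (α / (1 + α)) • (1 : Matrix (Fin p) (Fin p) ℝ)) = spec Sig - α / (1 + α) ∧
    spec (Sig - (α / (1 + α)) • (1 : Matrix (Fin p) (Fin p) ℝ))
      ≤ (C / (1 + α)) * (α / (1 + α)) * (1 / (1 - C / (1 + α))) := by
  have : NeZero p := ⟨hp.ne'⟩
  have h1α : 0 < 1 + α := by linarith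
  set c := α / (1 + α)
  set w : Fin n → ℝ := fun i => 1 / (x i ⬝ᵥ (Sig⁻¹ *ᵥ x i))
  set k := 1 / (1 + α) * ((p : ℝ) / n)
  have hk : 0 ≤ k := by positivity
  have hw : ∀ i, 0 ≤ w i := fun i => one_div_nonneg.mpr <| by
    simpa using hSig.inv.posSemidef.dotProduct_mulVec_nonneg (x i)
  have hwSig : ∀ i, w i ≤ spec Sig := fun i =>
    one_div_dotProduct_inv_mulVec_le_spec hSig (by simpa [dotProduct, sq] using hunit i)
  have hP : Sig - c • 1 = k • ∑ i, w i • vecMulVec (x i) (x i) := by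
    rw [hfix, add_sub_cancel_right, smul_smul]
  have hspec : spec Sig = spec (Sig - c • 1) + c := by
    have hPpsd : (Sig - c • 1).PosSemidef := hP ▸ (posSemidef_sum_smul_vecMulVec x hw).smul hk
    rw [← spec_add_smul_one hPpsd (by positivity), sub_add_cancel]
  have hbound : spec (Sig - c • 1) ≤ C / (1 + α) * spec Sig := by
    rw [hP, spec_smul, abs_of_nonneg hk, hC]
    calc k * spec (∑ i, w i • vecMulVec (x i) (x i))
        ≤ k * (spec Sig * spec (∑ i, vecMulVec (x i) (x i))) :=
          mul_le_mul_of_nonneg_left (spec_sum_smul_vecMulVec_le x hw hwSig (norm_nonneg _)) hk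
      _ = (p / n) * spec (∑ i, vecMulVec (x i) (x i)) / (1 + α) * spec Sig := by ring
  have hr : 0 < 1 - C / (1 + α) := by rw [sub_pos, div_lt_one h1α]; exact hCα
  refine ⟨?_, by rw [hspec]; ring, ?_⟩
  · rw [mul_one_div, le_div_iff₀ hr]
    linarith
  · rw [mul_one_div, le_div_iff₀ hr]
    nlinarith

theorem stmt9 {p n : ℕ} (hp : 0 < p) (hn : 0 < n)
    (x : Fin n → Fin p → ℝ) (hunit : ∀ i, ∑ j, x i j ^ 2 = 1)
    (α : ℝ) (hα : 0 < α)
    (Sig : Matrix (Fin p) (Fin p) ℝ) (hSig : Sig.PosDef)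
    (hfix : Sig = (1 / (1 + α)) • (((p : ℝ) / n) •
        ∑ i, (1 / (x i ⬝ᵥ (Sig⁻¹ *ᵥ x i))) • Matrix.vecMulVec (x i) (x i)) +
      (α / (1 + α)) • (1 : Matrix (Fin p) (Fin p) ℝ))
    (C : ℝ) (hC : C = ((p : ℝ) / n) * spec (∑ i, Matrix.vecMulVec (x i) (x i)))
    (hCα : C < 1 + α) :
    spec Sig ≤ (α / (1 + α)) * (1 / (1 - C / (1 + α))) ∧
    spec (Sig - (α / (1 + α)) • (1 : Matrix (Fin p) (Fin p) ℝ)) = spec Sig - α / (1 + α) ∧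
    spec (Sig - (α / (1 + α)) • (1 : Matrix (Fin p) (Fin p) ℝ))
      ≤ (C / (1 + α)) * (α / (1 + α)) * (1 / (1 - C / (1 + α))) :=
  stmt9_general hp x hunit α hα Sig hSig hfix C hC hCα
end

section
/- Let F, F' be symmetric positive definite p×p matrices and x, y nonzero vectors in ℝ^p. Suppose λ_min(F) ≥ c_F > 0, λ_min(F') ≥ c_F, ‖F‖ ≤ 1/β, ‖F'‖ ≤ 1/β for some β > 0. Then |(xᵀFy)²/(xᵀFx)² − (xᵀF'y)²/(xᵀF'x)²| ≤ (2/(β c_F⁴))·(‖y‖⁴/‖x‖⁴)·‖F − F'‖ + (2/(β c_F²))·(‖y‖²/‖x‖²)·‖F − F'‖. -/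
/-!
Write `r = ⟪x, F y⟫ / ⟪x, F x⟫` and `r'` likewise for `F'`, so that the left-hand side is
`|r - r'| * |r + r'|`. Projecting `y` away from `x` orthogonally for the form of `F'` gives
`z = y - r' x` with `⟪x, F' z⟫ = 0`, hence `(r - r') ⟪x, F x⟫ = ⟪x, (F - F') z⟫`, of size at most
`‖F - F'‖ ‖x‖ ‖z‖`. The projection does not increase the quadratic form of `F'`, so
`c_F ‖z‖² ≤ ‖y‖² / β`, and Cauchy–Schwarz for the form of `F` gives `r² ≤ ‖y‖² / (β c_F ‖x‖²)`;
the same holds for `r'`. Hence `|r| ‖z‖` and `|r'| ‖z‖` are at most `‖y‖² / (β c_F ‖x‖)`, and the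
left-hand side is at most `2 ‖y‖² ‖F - F'‖ / (β c_F² ‖x‖²)`, already the second term of the bound.
-/

open Matrix

open scoped BigOperators

noncomputable def enorm {p : ℕ} (x : Fin p → ℝ) : ℝ := Real.sqrt (∑ i, x i ^ 2)

namespace LinearMap.BilinForm

section Algebraic

variable {E : Type*} [AddCommGroup E] [Module ℝ E] {B : LinearMap.BilinForm ℝ E}

theorem sq_apply_div_apply_self_le (hs : ∀ v, 0 ≤ B v v) (hB : LinearMap.IsSymm B) (x y : E) :
    (B x y / B x x) ^ 2 ≤ B y y / B x x := by
  rcases eq_or_ne (B x x) 0 with hx | hx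
  · simp [hx]
  calc (B x y / B x x) ^ 2 = (B x y) ^ 2 / (B x x) ^ 2 := div_pow _ _ _
    _ ≤ B x x * B y y / (B x x) ^ 2 :=
      div_le_div_of_nonneg_right (B.apply_sq_le_of_symm hs hB x y) (sq_nonneg _)
    _ = B y y / B x x := by field_simp

theorem apply_self_sub_div_smul (hB : LinearMap.IsSymm B) {x : E} (hx : B x x ≠ 0) (y : E) :
    B (y - (B x y / B x x) • x) (y - (B x y / B x x) • x) = B y y - (B x y) ^ 2 / B x x := by
  have hyx : B y x = B x y := (hB.eq x y).symm
  simp only [map_sub, map_smul, LinearMap.sub_apply, LinearMap.smul_apply, smul_eq_mul, hyx]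
  field_simp
  ring

end Algebraic

section Normed

variable {E : Type*} [NormedAddCommGroup E] [Module ℝ E] {B B' : LinearMap.BilinForm ℝ E}
  {c M : ℝ}

theorem abs_div_apply_self_mul_norm_le (hB : LinearMap.IsSymm B) (hc : 0 < c)
    (hBc : ∀ v, c * ‖v‖ ^ 2 ≤ B v v) (hBM : ∀ v, B v v ≤ M * ‖v‖ ^ 2) {x : E} (hx : x ≠ 0)
    (y z : E) (hz : c * ‖z‖ ^ 2 ≤ M * ‖y‖ ^ 2) :
    |B x y / B x x| * ‖z‖ ≤ M * ‖y‖ ^ 2 / (c * ‖x‖) := by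
  have hX : 0 < ‖x‖ := norm_pos_iff.mpr hx
  have hs (v : E) : 0 ≤ B v v := (by positivity : 0 ≤ c * ‖v‖ ^ 2).trans (hBc v)
  have hMY : 0 ≤ M * ‖y‖ ^ 2 := (hs y).trans (hBM y)
  have hratio : (B x y / B x x) ^ 2 ≤ M * ‖y‖ ^ 2 / (c * ‖x‖ ^ 2) :=
    (sq_apply_div_apply_self_le hs hB x y).trans (div_le_div₀ hMY (hBM y) (by positivity) (hBc x))
  have hzsq : ‖z‖ ^ 2 ≤ M * ‖y‖ ^ 2 / c := by rwa [le_div_iff₀ hc, mul_comm]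
  rw [← pow_le_pow_iff_left₀ (by positivity) (div_nonneg hMY (by positivity)) two_ne_zero]
  calc (|B x y / B x x| * ‖z‖) ^ 2 = (B x y / B x x) ^ 2 * ‖z‖ ^ 2 := by rw [mul_pow, sq_abs]
    _ ≤ M * ‖y‖ ^ 2 / (c * ‖x‖ ^ 2) * (M * ‖y‖ ^ 2 / c) := by gcongr
    _ = (M * ‖y‖ ^ 2 / (c * ‖x‖)) ^ 2 := by field_simp

theorem abs_sq_div_sq_sub_sq_div_sq_le (hB : LinearMap.IsSymm B) (hB' : LinearMap.IsSymm B')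
    {d : ℝ} (hc : 0 < c) (hBc : ∀ v, c * ‖v‖ ^ 2 ≤ B v v) (hB'c : ∀ v, c * ‖v‖ ^ 2 ≤ B' v v)
    (hBM : ∀ v, B v v ≤ M * ‖v‖ ^ 2) (hB'M : ∀ v, B' v v ≤ M * ‖v‖ ^ 2)
    (hd : ∀ u v, |B u v - B' u v| ≤ d * ‖u‖ * ‖v‖) {x : E} (hx : x ≠ 0) (y : E) :
    |(B x y) ^ 2 / (B x x) ^ 2 - (B' x y) ^ 2 / (B' x x) ^ 2|
      ≤ 2 * M / c ^ 2 * (‖y‖ ^ 2 / ‖x‖ ^ 2) * d := by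
  have hX : 0 < ‖x‖ := norm_pos_iff.mpr hx
  have hb : 0 < B x x := (by positivity : 0 < c * ‖x‖ ^ 2).trans_le (hBc x)
  have hb' : 0 < B' x x := (by positivity : 0 < c * ‖x‖ ^ 2).trans_le (hB'c x)
  have hd0 : 0 ≤ d := by
    have := (abs_nonneg _).trans (hd x x)
    rw [mul_assoc] at this
    exact nonneg_of_mul_nonneg_left this (by positivity)
  set r := B x y / B x x
  set r' := B' x y / B' x x
  set z := y - r' • x
  have hz : c * ‖z‖ ^ 2 ≤ M * ‖y‖ ^ 2 := by
    have hproj := apply_self_sub_div_smul hB' hb'.ne' y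
    have hsq : 0 ≤ B' x y ^ 2 / B' x x := by positivity
    linarith [hB'c z, hB'M y]
  have hdiff : (r - r') * B x x = B x z - B' x z := by
    simp only [z, r, r', map_sub, map_smul, smul_eq_mul]
    field_simp
    ring
  have hrr' : |r - r'| ≤ d * ‖x‖ * ‖z‖ / B x x := by
    rw [le_div_iff₀ hb, ← abs_of_pos hb, ← abs_mul, hdiff]
    exact hd x z
  have hrz := abs_div_apply_self_mul_norm_le hB hc hBc hBM hx y z hz
  have hr'z := abs_div_apply_self_mul_norm_le hB' hc hB'c hB'M hx y z hz
  have hK : 0 ≤ M * ‖y‖ ^ 2 / (c * ‖x‖) := (by positivity : 0 ≤ |r| * ‖z‖).trans hrz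
  calc |(B x y) ^ 2 / (B x x) ^ 2 - (B' x y) ^ 2 / (B' x x) ^ 2| = |r - r'| * |r + r'| := by
        rw [← div_pow, ← div_pow, sq_sub_sq, abs_mul, mul_comm]
    _ ≤ d * ‖x‖ * ‖z‖ / B x x * (|r| + |r'|) := by gcongr; exact abs_add_le r r'
    _ = d * ‖x‖ * (|r| * ‖z‖ + |r'| * ‖z‖) / B x x := by ring
    _ ≤ d * ‖x‖ * (2 * (M * ‖y‖ ^ 2 / (c * ‖x‖))) / (c * ‖x‖ ^ 2) := by
        gcongr
        · linarith
        · exact hBc x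
    _ = 2 * M / c ^ 2 * (‖y‖ ^ 2 / ‖x‖ ^ 2) * d := by field_simp

end Normed

end LinearMap.BilinForm

open scoped RealInnerProductSpace

namespace ContinuousLinearMap

variable {E : Type*} [NormedAddCommGroup E] [InnerProductSpace ℝ E]

theorem abs_inner_apply_le (S : E →L[ℝ] E) (u v : E) : |⟪u, S v⟫| ≤ ‖S‖ * ‖u‖ * ‖v‖ :=
  calc |⟪u, S v⟫| ≤ ‖u‖ * ‖S v‖ := abs_real_inner_le_norm _ _
    _ ≤ ‖u‖ * (‖S‖ * ‖v‖) := by gcongr; exact S.le_opNorm v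
    _ = ‖S‖ * ‖u‖ * ‖v‖ := by ring

theorem abs_sq_inner_div_sq_sub_sq_inner_div_sq_le {T T' : E →L[ℝ] E}
    (hT : (T : E →ₗ[ℝ] E).IsSymmetric) (hT' : (T' : E →ₗ[ℝ] E).IsSymmetric) {c M : ℝ}
    (hc : 0 < c) (hTc : ∀ v, c * ‖v‖ ^ 2 ≤ ⟪v, T v⟫) (hT'c : ∀ v, c * ‖v‖ ^ 2 ≤ ⟪v, T' v⟫)
    (hTM : ‖T‖ ≤ M) (hT'M : ‖T'‖ ≤ M) {x : E} (hx : x ≠ 0) (y : E) :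
    |⟪x, T y⟫ ^ 2 / ⟪x, T x⟫ ^ 2 - ⟪x, T' y⟫ ^ 2 / ⟪x, T' x⟫ ^ 2|
      ≤ 2 * M / c ^ 2 * (‖y‖ ^ 2 / ‖x‖ ^ 2) * ‖T - T'‖ := by
  have isSymm {S : E →L[ℝ] E} (hS : (S : E →ₗ[ℝ] E).IsSymmetric) :
      LinearMap.IsSymm ((innerₗ E).compl₂ (S : E →ₗ[ℝ] E)) :=
    ⟨fun u v ↦ by simpa [real_inner_comm] using (hS u v).symm⟩
  have le_norm_mul {S : E →L[ℝ] E} (hS : ‖S‖ ≤ M) (v : E) : ⟪v, S v⟫ ≤ M * ‖v‖ ^ 2 :=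
    calc ⟪v, S v⟫ ≤ ‖S‖ * ‖v‖ * ‖v‖ := (le_abs_self _).trans (S.abs_inner_apply_le v v)
      _ ≤ M * ‖v‖ ^ 2 := by rw [mul_assoc, ← sq]; gcongr
  refine LinearMap.BilinForm.abs_sq_div_sq_sub_sq_div_sq_le (isSymm hT) (isSymm hT') hc hTc hT'c
    (le_norm_mul hTM) (le_norm_mul hT'M) (fun u v ↦ ?_) hx y
  simpa [inner_sub_right] using (T - T').abs_inner_apply_le u v

end ContinuousLinearMap

theorem Matrix.IsHermitian.mul_norm_sq_le_inner_toEuclideanCLM {n : Type*} [Fintype n]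
    [DecidableEq n] {A : Matrix n n ℝ} (hA : A.IsHermitian) {c : ℝ} (hc : ∀ i, c ≤ hA.eigenvalues i) (v : EuclideanSpace ℝ n) :
    c * ‖v‖ ^ 2 ≤ ⟪v, toEuclideanCLM (𝕜 := ℝ) A v⟫ := by
  have hpos : (A - algebraMap ℝ _ c).PosSemidef := by
    refine posSemidef_iff_isHermitian_and_spectrum_nonneg.mpr
      ⟨hA.sub (isHermitian_diagonal _), ?_⟩
    rw [← spectrum.sub_singleton_eq, hA.spectrum_real_eq_range_eigenvalues]
    rintro _ ⟨_, ⟨i, rfl⟩, _, rfl, rfl⟩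
    exact sub_nonneg.mpr (hc i)
  have := hpos.dotProduct_mulVec_nonneg v.ofLp
  rw [star_trivial, Algebra.algebraMap_eq_smul_one, sub_mulVec, smul_mulVec, one_mulVec,
    dotProduct_sub, dotProduct_smul, sub_nonneg] at this
  rw [inner_toEuclideanCLM, ← real_inner_self_eq_norm_sq]
  exact this

theorem enorm_eq_norm_toLp {p : ℕ} (x : Fin p → ℝ) : _root_.enorm x = ‖WithLp.toLp 2 x‖ := by
  simp [EuclideanSpace.norm_eq, _root_.enorm]

theorem stmt16_general {p : ℕ} (F F' : Matrix (Fin p) (Fin p) ℝ) (hF : F.PosDef) (hF' : F'.PosDef)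
    (x y : Fin p → ℝ) (hx : x ≠ 0)
    (cF β : ℝ) (hcF : 0 < cF) (hβ : 0 < β)
    (hFmin : cF ≤ ⨅ i, hF.1.eigenvalues i) (hF'min : cF ≤ ⨅ i, hF'.1.eigenvalues i)
    (hFnorm : spec F ≤ 1 / β) (hF'norm : spec F' ≤ 1 / β) :
    |(x ⬝ᵥ (F *ᵥ y)) ^ 2 / (x ⬝ᵥ (F *ᵥ x)) ^ 2 -
        (x ⬝ᵥ (F' *ᵥ y)) ^ 2 / (x ⬝ᵥ (F' *ᵥ x)) ^ 2|
      ≤ (2 / (β * cF ^ 4)) * (_root_.enorm y ^ 4 / _root_.enorm x ^ 4) * spec (F - F') +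
        (2 / (β * cF ^ 2)) * (_root_.enorm y ^ 2 / _root_.enorm x ^ 2) * spec (F - F') := by
  have hev {A : Matrix (Fin p) (Fin p) ℝ} (hA : A.IsHermitian) (h : cF ≤ ⨅ i, hA.eigenvalues i)
      (i : Fin p) : cF ≤ hA.eigenvalues i :=
    h.trans (ciInf_le (Set.finite_range _).bddBelow i)
  have key := ContinuousLinearMap.abs_sq_inner_div_sq_sub_sq_inner_div_sq_le
    (isSymmetric_toEuclideanLin_iff.mpr hF.1) (isSymmetric_toEuclideanLin_iff.mpr hF'.1) hcF
    (hF.1.mul_norm_sq_le_inner_toEuclideanCLM (hev hF.1 hFmin))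
    (hF'.1.mul_norm_sq_le_inner_toEuclideanCLM (hev hF'.1 hF'min)) hFnorm hF'norm
    (x := WithLp.toLp 2 x) (by simpa using hx) (WithLp.toLp 2 y)
  simp only [inner_toEuclideanCLM, ← map_sub, ← enorm_eq_norm_toLp] at key
  calc _ ≤ 2 * (1 / β) / cF ^ 2 * (_root_.enorm y ^ 2 / _root_.enorm x ^ 2) * spec (F - F') := key
    _ ≤ _ := by
      rw [show 2 * (1 / β) / cF ^ 2 = 2 / (β * cF ^ 2) by ring]
      exact le_add_of_nonneg_left (by unfold spec; positivity)

theorem stmt16 {p : ℕ} (F F' : Matrix (Fin p) (Fin p) ℝ) (hF : F.PosDef) (hF' : F'.PosDef)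
    (x y : Fin p → ℝ) (hx : x ≠ 0) (hy : y ≠ 0)
    (cF β : ℝ) (hcF : 0 < cF) (hβ : 0 < β)
    (hFmin : cF ≤ ⨅ i, hF.1.eigenvalues i) (hF'min : cF ≤ ⨅ i, hF'.1.eigenvalues i)
    (hFnorm : spec F ≤ 1 / β) (hF'norm : spec F' ≤ 1 / β) :
    |(x ⬝ᵥ (F *ᵥ y)) ^ 2 / (x ⬝ᵥ (F *ᵥ x)) ^ 2 -
        (x ⬝ᵥ (F' *ᵥ y)) ^ 2 / (x ⬝ᵥ (F' *ᵥ x)) ^ 2|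
      ≤ (2 / (β * cF ^ 4)) * (_root_.enorm y ^ 4 / _root_.enorm x ^ 4) * spec (F - F') +
        (2 / (β * cF ^ 2)) * (_root_.enorm y ^ 2 / _root_.enorm x ^ 2) * spec (F - F') :=
  stmt16_general F F' hF hF' x y hx cF β hcF hβ hFmin hF'min hFnorm hF'norm
end

section
/- Let T₋ be symmetric positive semidefinite, β > 0, E₋ = (T₋ + βI)⁻¹, d₁ = ‖T₋‖, and let x ∈ ℝ^p be nonzero. Define Q = (1/p)xᵀE₋x and R = (1/p)xᵀE₋T₋E₋x. Then R/Q ≤ d₁/(d₁+β) < 1. -/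
open Matrix

open scoped BigOperators

theorem stmt18 {p : ℕ} (hp : 0 < p) (Tm : Matrix (Fin p) (Fin p) ℝ) (hT : Tm.PosSemidef)
    (β : ℝ) (hβ : 0 < β) (x : Fin p → ℝ) (hx : x ≠ 0) :
    ((1 / (p : ℝ)) * (x ⬝ᵥ (((Tm + β • 1)⁻¹ * Tm * (Tm + β • 1)⁻¹) *ᵥ x))) /
        ((1 / (p : ℝ)) * (x ⬝ᵥ ((Tm + β • 1)⁻¹ *ᵥ x)))
      ≤ spec Tm / (spec Tm + β) ∧
    spec Tm / (spec Tm + β) < 1 := by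
  set d : ℝ := spec Tm with hd
  have hd0 : 0 ≤ d := norm_nonneg _
  have hdiv1 : d / (d + β) < 1 := by
    rw [div_lt_one (by linarith)]; linarith
  refine ⟨?_, hdiv1⟩
  set M : Matrix (Fin p) (Fin p) ℝ := Tm + β • 1 with hM
  -- M is positive definite
  have hMpd : M.PosDef := by
    refine Matrix.PosDef.of_dotProduct_mulVec_pos ?_ (fun v hv => ?_)
    · exact (hT.isHermitian.add (by simp [Matrix.IsHermitian, Matrix.conjTranspose_smul]))
    · have h1 : (0 : ℝ) ≤ star v ⬝ᵥ Tm *ᵥ v := hT.dotProduct_mulVec_nonneg v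
      have h2 : (0 : ℝ) < v ⬝ᵥ v := by
        have := Matrix.dotProduct_self_star_pos_iff (v := v) |>.2 hv
        simpa using this
      have : star v ⬝ᵥ M *ᵥ v = star v ⬝ᵥ Tm *ᵥ v + β * (v ⬝ᵥ v) := by
        simp [hM, Matrix.add_mulVec, dotProduct_add, Matrix.smul_mulVec,
          dotProduct_smul, smul_eq_mul]
      rw [this]
      nlinarith
  have hMunit := hMpd.isUnit
  have hInst := hMunit.invertible
  set y : Fin p → ℝ := M⁻¹ *ᵥ x with hy
  have hx_eq : M *ᵥ y = x := by
    rw [hy, Matrix.mulVec_mulVec, Matrix.mul_inv_of_invertible, Matrix.one_mulVec]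
  have hy0 : y ≠ 0 := by
    intro h
    apply hx
    rw [← hx_eq, h, Matrix.mulVec_zero]
  -- symmetry of M⁻¹
  have hEsym : (M⁻¹)ᵀ = M⁻¹ := by
    have := hMpd.inv.isHermitian
    simpa [Matrix.IsHermitian] using this
  have hTsym : Tmᵀ = Tm := by
    simpa [Matrix.IsHermitian] using hT.isHermitian
  have hMsym : Mᵀ = M := by
    simpa [Matrix.IsHermitian] using hMpd.isHermitian
  set a : ℝ := y ⬝ᵥ Tm *ᵥ y with ha
  set nn : ℝ := y ⬝ᵥ y with hnn
  have ha0 : 0 ≤ a := by simpa using hT.dotProduct_mulVec_nonneg y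
  have hnn0 : 0 < nn := by
    have := Matrix.dotProduct_self_star_pos_iff (v := y) |>.2 hy0
    simpa [hnn] using this
  -- Q = a + β nn
  have hQ : x ⬝ᵥ y = a + β * nn := by
    conv_lhs => rw [← hx_eq, dotProduct_comm]
    simp [hM, Matrix.add_mulVec, dotProduct_add, Matrix.smul_mulVec,
      dotProduct_smul, smul_eq_mul, ha, hnn]
  -- R numerator = a
  have hR : x ⬝ᵥ ((M⁻¹ * Tm * M⁻¹) *ᵥ x) = a := by
    have h1 : (M⁻¹ * Tm * M⁻¹) *ᵥ x = M⁻¹ *ᵥ (Tm *ᵥ y) := by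
      rw [hy, Matrix.mulVec_mulVec, Matrix.mulVec_mulVec]
    rw [h1, Matrix.dotProduct_mulVec, ← Matrix.mulVec_transpose, hEsym, ← hy, ha]
  -- key spectral bound : a ≤ d * nn
  have hkey : a ≤ d * nn := by
    set v : EuclideanSpace ℝ (Fin p) := (WithLp.equiv 2 (Fin p → ℝ)).symm y with hv
    have hA : Matrix.toEuclideanCLM (𝕜 := ℝ) (n := Fin p) Tm v
        = (WithLp.equiv 2 (Fin p → ℝ)).symm (Tm *ᵥ y) := by
      rw [hv]; rfl
    have hinner : a = inner ℝ v (Matrix.toEuclideanCLM (𝕜 := ℝ) (n := Fin p) Tm v) := by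
      rw [hA, hv]
      simp [PiLp.inner_apply, dotProduct, ha, mul_comm]
    have hnorm : ‖v‖ ^ 2 = nn := by
      rw [← real_inner_self_eq_norm_sq]
      simp [hv, PiLp.inner_apply, dotProduct, hnn, mul_comm]
      rw [EuclideanSpace.norm_sq_eq]; simp [sq]
    calc a = inner ℝ v (Matrix.toEuclideanCLM (𝕜 := ℝ) (n := Fin p) Tm v) := hinner
      _ ≤ ‖v‖ * ‖Matrix.toEuclideanCLM (𝕜 := ℝ) (n := Fin p) Tm v‖ := real_inner_le_norm _ _
      _ ≤ ‖v‖ * (‖Matrix.toEuclideanCLM (𝕜 := ℝ) (n := Fin p) Tm‖ * ‖v‖) := by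
            exact mul_le_mul_of_nonneg_left
              ((Matrix.toEuclideanCLM (𝕜 := ℝ) (n := Fin p) Tm).le_opNorm v) (norm_nonneg v)
      _ = d * ‖v‖ ^ 2 := by simp only [hd, spec]; ring
      _ = d * nn := by rw [hnorm]
  -- conclude
  have hp' : (0 : ℝ) < (p : ℝ) := by exact_mod_cast hp
  have hcancel : ((1 / (p : ℝ)) * (x ⬝ᵥ ((M⁻¹ * Tm * M⁻¹) *ᵥ x))) /
      ((1 / (p : ℝ)) * (x ⬝ᵥ y)) = a / (a + β * nn) := by
    rw [hR, hQ, mul_div_mul_left _ _ (by positivity)]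
  rw [hcancel]
  rw [div_le_div_iff₀ (by nlinarith) (by linarith)]
  nlinarith [hkey]
end
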